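/- (Thick sets have large dimension) Fix θ ∈ (0, 1) and a θ-skeleton {Π_n(θ)} of ℝ^d. If E ⊂ ℝ^d is θ-thick (i.e., there is M such that E ∩ Q(x, e^{θn}) ≠ ∅ for every x ∈ Π_n(θ) and every n ≥ M), then Dim_H E ≥ d(1 − θ). -/
import Mathlib


open MeasureTheory Real Set

noncomputable section

/-- The upright box with southwest corner `x` and sidelength `r`. -/
def uprightBox (d : ℕ) (x : Fin d → ℝ) (r : ℝ) : Set (Fin d → ℝ) :=
  {y | ∀ i, y i ∈ Set.Ico (x i) (x i + r)}

/-- The box `[-e^n, e^n)^d`. -/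
def macroBall (d n : ℕ) : Set (Fin d → ℝ) :=
  {y | ∀ i, y i ∈ Set.Ico (-(Real.exp n)) (Real.exp n)}

/-- The `n`-th exponential shell. -/
def shell (d : ℕ) : ℕ → Set (Fin d → ℝ)
  | 0 => macroBall d 0
  | n + 1 => macroBall d (n + 1) \ macroBall d n

/-- The Barlow–Taylor content `ν^n_ρ(E)`: infimum of `Σ (side(Q_i)/e^n)^ρ` over finite
covers of `E ∩ S_n` by upright boxes of sidelength at least 1. -/
def nuN (d : ℕ) (ρ : ℝ) (n : ℕ) (E : Set (Fin d → ℝ)) : ℝ :=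
  sInf { s : ℝ | ∃ (m : ℕ) (c : Fin m → Fin d → ℝ) (r : Fin m → ℝ),
    (∀ i, 1 ≤ r i) ∧ (E ∩ shell d n ⊆ ⋃ i, uprightBox d (c i) (r i)) ∧
    s = ∑ i, (r i / Real.exp n) ^ ρ }

/-- The macroscopic (Barlow–Taylor) Hausdorff dimension. -/
def DimH (d : ℕ) (E : Set (Fin d → ℝ)) : ℝ :=
  sInf { ρ : ℝ | 0 < ρ ∧ Summable (fun n => nuN d ρ n E) }

end

lemma uprightBox_eq (d : ℕ) (x : Fin d → ℝ) (r : ℝ) :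
    uprightBox d x r = Set.pi Set.univ (fun i => Set.Ico (x i) (x i + r)) := by
  ext y; simp [uprightBox, Set.mem_pi]

lemma measurableSet_uprightBox (d : ℕ) (x : Fin d → ℝ) (r : ℝ) :
    MeasurableSet (uprightBox d x r) := by
  rw [uprightBox_eq]; exact MeasurableSet.univ_pi fun i => measurableSet_Ico

lemma volume_uprightBox (d : ℕ) (x : Fin d → ℝ) (r : ℝ) :
    volume (uprightBox d x r) = ENNReal.ofReal r ^ d := by
  rw [uprightBox_eq, volume_pi_pi]
  simp [Real.volume_Ico]

lemma shell_subset_macroBall (d n : ℕ) : shell d n ⊆ macroBall d n := by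
  cases n with
  | zero => exact subset_rfl
  | succ k => exact Set.diff_subset

lemma card_mul_le_of_disjoint (d : ℕ) (F : Finset (Fin d → ℝ)) (s L : ℝ) (hs : 0 < s)
    (hL : 0 ≤ L) (z : Fin d → ℝ)
    (hdisj : (F : Set (Fin d → ℝ)).PairwiseDisjoint (fun x => uprightBox d x s))
    (hsub : ∀ x ∈ F, uprightBox d x s ⊆ uprightBox d z L) :
    (F.card : ℝ) * s ^ d ≤ L ^ d := by
  have h1 : volume (⋃ x ∈ F, uprightBox d x s) = ∑ x ∈ F, volume (uprightBox d x s) :=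
    measure_biUnion_finset hdisj fun x _ => measurableSet_uprightBox d x s
  have h2 : volume (⋃ x ∈ F, uprightBox d x s) ≤ volume (uprightBox d z L) :=
    measure_mono (Set.iUnion₂_subset hsub)
  rw [h1, volume_uprightBox] at h2
  simp only [volume_uprightBox] at h2
  rw [Finset.sum_const, nsmul_eq_mul] at h2
  have h3 : ENNReal.ofReal ((F.card : ℝ) * s ^ d) ≤ ENNReal.ofReal (L ^ d) := by
    rw [ENNReal.ofReal_mul (by positivity), ENNReal.ofReal_pow hs.le,
      ENNReal.ofReal_pow hL, ENNReal.ofReal_natCast]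
    exact h2
  have := (ENNReal.ofReal_le_ofReal_iff (by positivity)).1 h3
  exact this

lemma exp_rpow' (x y : ℝ) : Real.exp x ^ y = Real.exp (x * y) := by
  rw [← Real.exp_mul]

lemma per_box (d n : ℕ) (θ ρ r : ℝ) (hθ0 : 0 < θ) (hθ1 : θ < 1) (hρ0 : 0 < ρ)
    (hρd : ρ ≤ d * (1 - θ)) (hr1 : 1 ≤ r) (hr2 : r ≤ 2 * Real.exp n) :
    ((r + 2 * Real.exp (θ * n)) / Real.exp (θ * n)) ^ d
      ≤ 6 ^ d * Real.exp (n * (1 - θ) * d) * (r / Real.exp n) ^ ρ := by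
  set s : ℝ := Real.exp (θ * n) with hs_def
  have hs : 0 < s := Real.exp_pos _
  have hs1 : 1 ≤ s := Real.one_le_exp (by positivity)
  set w : ℝ := r / Real.exp n with hw_def
  have hw0 : 0 < w := by positivity
  have hw2 : w ≤ 2 := by
    rw [hw_def, div_le_iff₀ (Real.exp_pos _)]; linarith
  have hwlow : Real.exp (-(n : ℝ)) ≤ w := by
    rw [Real.exp_neg, hw_def, inv_eq_one_div]
    gcongr
  have hρled : ρ ≤ (d : ℝ) := by nlinarith [Nat.cast_nonneg (α := ℝ) d]
  have hrs : r / s = w * Real.exp ((1 - θ) * n) := by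
    rw [hw_def, hs_def, div_mul_eq_mul_div,
      div_eq_div_iff (Real.exp_pos _).ne' (Real.exp_pos _).ne', mul_assoc, ← Real.exp_add,
      show (1 - θ) * (n:ℝ) + θ * n = (n:ℝ) by ring]
  have h2d : (1:ℝ) ≤ 2 ^ d := one_le_pow₀ one_le_two
  -- step 1 : (r + 2s)/s ≤ 3 * max (r/s) 1
  have h3 : (r + 2 * s) / s ≤ 3 * max (r / s) 1 := by
    rw [div_le_iff₀ hs]
    have h₁ : r ≤ s * max (r / s) 1 := by
      calc r = s * (r / s) := by field_simp
      _ ≤ s * max (r / s) 1 := mul_le_mul_of_nonneg_left (le_max_left _ _) hs.le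
    have h₂ : s ≤ s * max (r / s) 1 := le_mul_of_one_le_right hs.le (le_max_right _ _)
    linarith
  have hmaxnn : (0:ℝ) ≤ max (r / s) 1 := le_trans zero_le_one (le_max_right _ _)
  have hLnn : 0 ≤ (r + 2 * s) / s := by positivity
  have step1 : ((r + 2 * s) / s) ^ d ≤ 3 ^ d * (max (r / s) 1) ^ d := by
    rw [← mul_pow]
    exact pow_le_pow_left₀ hLnn h3 d
  -- step 2 : max^d ≤ 2^d * exp(n(1-θ)d) * w^ρ
  have step2 : (max (r / s) 1) ^ d ≤ 2 ^ d * Real.exp (n * (1 - θ) * d) * w ^ ρ := by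
    rcases le_total r s with hcase | hcase
    · have hm : max (r / s) 1 = 1 := max_eq_right ((div_le_one hs).2 hcase)
      rw [hm, one_pow]
      have hwρ : Real.exp (-(n : ℝ) * ρ) ≤ w ^ ρ := by
        rw [← exp_rpow']
        exact Real.rpow_le_rpow (Real.exp_pos _).le hwlow hρ0.le
      have hexp1 : (1:ℝ) ≤ Real.exp ((n:ℝ) * (1 - θ) * d) * Real.exp (-(n : ℝ) * ρ) := by
        rw [← Real.exp_add]
        apply Real.one_le_exp
        nlinarith [mul_nonneg (Nat.cast_nonneg (α := ℝ) n) (sub_nonneg.2 hρd)]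
      have hX : (0:ℝ) ≤ Real.exp ((n:ℝ) * (1 - θ) * d) * w ^ ρ := by positivity
      have step : Real.exp ((n:ℝ) * (1 - θ) * d) * Real.exp (-(n : ℝ) * ρ)
          ≤ Real.exp ((n:ℝ) * (1 - θ) * d) * w ^ ρ :=
        mul_le_mul_of_nonneg_left hwρ (Real.exp_pos _).le
      nlinarith [mul_nonneg (sub_nonneg.2 h2d) hX]
    · have hm : max (r / s) 1 = r / s := max_eq_left ((one_le_div hs).2 hcase)
      rw [hm, hrs, mul_pow]
      have hkey : w ^ d ≤ 2 ^ d * w ^ ρ := by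
        rw [← Real.rpow_natCast w d]
        rcases le_total w 1 with hw1 | hw1
        · have hle : w ^ (d : ℝ) ≤ w ^ ρ := Real.rpow_le_rpow_of_exponent_ge hw0 hw1 hρled
          nlinarith [Real.rpow_nonneg hw0.le ρ]
        · have hsplit : w ^ (d : ℝ) = w ^ ρ * w ^ ((d : ℝ) - ρ) := by
            rw [← Real.rpow_add hw0]; ring_nf
          rw [hsplit]
          have h1 : w ^ ((d : ℝ) - ρ) ≤ (2:ℝ) ^ ((d : ℝ) - ρ) :=
            Real.rpow_le_rpow hw0.le hw2 (by linarith)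
          have h2 : (2:ℝ) ^ ((d : ℝ) - ρ) ≤ (2:ℝ) ^ (d : ℝ) :=
            Real.rpow_le_rpow_of_exponent_le one_le_two (by linarith)
          have h3' : (2:ℝ) ^ ((d:ℝ)) = (2:ℝ) ^ d := Real.rpow_natCast 2 d
          calc w ^ ρ * w ^ ((d : ℝ) - ρ) ≤ w ^ ρ * 2 ^ d := by
                apply mul_le_mul_of_nonneg_left _ (Real.rpow_nonneg hw0.le ρ)
                rw [← h3']; exact h1.trans h2
            _ = 2 ^ d * w ^ ρ := by ring
      calc w ^ d * Real.exp ((1 - θ) * ↑n) ^ d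
          ≤ (2 ^ d * w ^ ρ) * Real.exp ((1 - θ) * ↑n) ^ d :=
            mul_le_mul_of_nonneg_right hkey (by positivity)
        _ = 2 ^ d * Real.exp (↑n * (1 - θ) * ↑d) * w ^ ρ := by
            rw [← Real.exp_nat_mul, show (d:ℝ) * ((1 - θ) * ↑n) = ↑n * (1 - θ) * ↑d by ring]
            ring
  calc ((r + 2 * s) / s) ^ d ≤ 3 ^ d * (max (r / s) 1) ^ d := step1
    _ ≤ 3 ^ d * (2 ^ d * Real.exp (n * (1 - θ) * d) * w ^ ρ) :=
        mul_le_mul_of_nonneg_left step2 (by positivity)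
    _ = 6 ^ d * Real.exp (n * (1 - θ) * d) * w ^ ρ := by
        rw [show (6:ℝ)^d = 3^d * 2^d by rw [← mul_pow]; norm_num]
        ring

lemma nu_lower (d : ℕ) (θ a ρ : ℝ) (hθ0 : 0 < θ) (hθ1 : θ < 1)
    (ha0 : 0 < a) (ha1 : a < 1)
    (Pi : ℕ → Finset (Fin d → ℝ)) (N : ℕ)
    (hsub : ∀ n ≥ N, ∀ x ∈ Pi n, uprightBox d x (Real.exp (θ * n)) ⊆ shell d n)
    (hdisj : ∀ n ≥ N, ∀ x ∈ Pi n, ∀ y ∈ Pi n, x ≠ y →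
      Disjoint (uprightBox d x (Real.exp (θ * n))) (uprightBox d y (Real.exp (θ * n))))
    (hcard : ∀ n ≥ N, a * Real.exp (n * d * (1 - θ)) ≤ ((Pi n).card : ℝ))
    (E : Set (Fin d → ℝ)) (M : ℕ)
    (hthick : ∀ n ≥ M, ∀ x ∈ Pi n, (E ∩ uprightBox d x (Real.exp (θ * n))).Nonempty)
    (hρ0 : 0 < ρ) (hρd : ρ ≤ d * (1 - θ)) (n : ℕ) (hnN : N ≤ n) (hnM : M ≤ n) :
    a / 6 ^ d ≤ nuN d ρ n E := by
  classical
  set s : ℝ := Real.exp (θ * n) with hs_def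
  have hs : 0 < s := Real.exp_pos _
  have hs1 : 1 ≤ s := Real.one_le_exp (by positivity)
  have h6d : (1:ℝ) ≤ 6 ^ d := one_le_pow₀ (by norm_num)
  have ha6 : a / 6 ^ d ≤ 1 := by
    rw [div_le_one (by positivity)]; linarith
  apply le_csInf
  · refine ⟨∑ i : Fin 1, ((2 * Real.exp n) / Real.exp n) ^ ρ, 1,
      (fun _ _ => -(Real.exp n)), (fun _ => 2 * Real.exp n), fun _ => by
        show (1:ℝ) ≤ 2 * Real.exp n
        have := Real.one_le_exp (Nat.cast_nonneg n : (0:ℝ) ≤ (n:ℝ))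
        linarith, ?_, rfl⟩
    intro y hy
    apply Set.mem_iUnion.2
    refine ⟨0, fun j => ?_⟩
    have hm := shell_subset_macroBall d n hy.2 j
    show y j ∈ Set.Ico (-(Real.exp n)) (-(Real.exp n) + 2 * Real.exp n)
    exact ⟨hm.1, by linarith [hm.2]⟩
  · rintro t ⟨m, c, r, hr1, hcov, rfl⟩
    have hterm : ∀ i : Fin m, (0:ℝ) ≤ (r i / Real.exp n) ^ ρ := fun i =>
      Real.rpow_nonneg (div_nonneg (zero_le_one.trans (hr1 i)) (Real.exp_pos _).le) ρ
    by_cases hA : ∃ i, 2 * Real.exp n ≤ r i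
    · obtain ⟨i, hi⟩ := hA
      have h2 : (2:ℝ) ≤ r i / Real.exp n := (le_div_iff₀ (Real.exp_pos _)).2 (by linarith)
      have h3 : (1:ℝ) ≤ (r i / Real.exp n) ^ ρ := by
        have := Real.rpow_le_rpow (by norm_num) h2 hρ0.le
        have h20 : (2:ℝ) ^ (0:ℝ) ≤ (2:ℝ) ^ ρ :=
          Real.rpow_le_rpow_of_exponent_le one_le_two hρ0.le
        rw [Real.rpow_zero] at h20
        linarith
      have h4 : (r i / Real.exp n) ^ ρ ≤ ∑ j, (r j / Real.exp n) ^ ρ :=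
        Finset.single_le_sum (fun j _ => hterm j) (Finset.mem_univ i)
      linarith
    · push_neg at hA
      rcases Nat.eq_zero_or_pos m with hm0 | hmpos
      · exfalso
        have hcpos : (0:ℝ) < ((Pi n).card : ℝ) :=
          lt_of_lt_of_le (by positivity) (hcard n hnN)
        have : (Pi n).Nonempty := Finset.card_pos.1 (by exact_mod_cast hcpos)
        obtain ⟨x, hx⟩ := this
        obtain ⟨y, hyE, hyB⟩ := hthick n hnM x hx
        have hyS : y ∈ shell d n := hsub n hnN x hx hyB
        have := hcov ⟨hyE, hyS⟩
        subst hm0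
        simp at this
      · set f : (Fin d → ℝ) → Fin m := fun x =>
          if h : ∃ i : Fin m, ((E ∩ uprightBox d x s) ∩ uprightBox d (c i) (r i)).Nonempty
          then h.choose else ⟨0, hmpos⟩ with hf_def
        have hf : ∀ x ∈ Pi n,
            ((E ∩ uprightBox d x s) ∩ uprightBox d (c (f x)) (r (f x))).Nonempty := by
          intro x hx
          have hex : ∃ i : Fin m,
              ((E ∩ uprightBox d x s) ∩ uprightBox d (c i) (r i)).Nonempty := by
            obtain ⟨y, hyE, hyB⟩ := hthick n hnM x hx
            have hyS : y ∈ shell d n := hsub n hnN x hx hyB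
            obtain ⟨i, hi⟩ := Set.mem_iUnion.1 (hcov ⟨hyE, hyS⟩)
            exact ⟨i, y, ⟨hyE, hyB⟩, hi⟩
          simp only [hf_def, dif_pos hex]
          exact hex.choose_spec
        have hcount : (Pi n).card = ∑ i : Fin m, ((Pi n).filter (fun x => f x = i)).card :=
          Finset.card_eq_sum_card_fiberwise (fun x _ => Finset.mem_univ _)
        have hfiber : ∀ i : Fin m,
            (((Pi n).filter (fun x => f x = i)).card : ℝ) * s ^ d ≤ (r i + 2 * s) ^ d := by
          intro i
          apply card_mul_le_of_disjoint d _ s (r i + 2 * s) hs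
            (by nlinarith [hr1 i]) (fun j => c i j - s)
          · intro x hx y hy hxy
            simp only [Finset.coe_filter, Set.mem_setOf_eq] at hx hy
            exact hdisj n hnN x hx.1 y hy.1 hxy
          · intro x hx
            rw [Finset.mem_filter] at hx
            have hne := hf x hx.1
            rw [hx.2] at hne
            obtain ⟨y, ⟨hyE, hyB⟩, hyC⟩ := hne
            intro z hz
            intro j
            have h1 := hyB j
            have h2 := hz j
            have h3 := hyC j
            show z j ∈ Set.Ico (c i j - s) (c i j - s + (r i + 2 * s))
            exact ⟨by linarith [h1.2, h3.1, h2.1], by linarith [h1.1, h3.2, h2.2]⟩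
        have hchain : a * Real.exp (n * d * (1 - θ))
            ≤ 6 ^ d * Real.exp (n * (1 - θ) * d) * ∑ i, (r i / Real.exp n) ^ ρ := by
          calc a * Real.exp (n * d * (1 - θ)) ≤ ((Pi n).card : ℝ) := hcard n hnN
            _ = ∑ i : Fin m, (((Pi n).filter (fun x => f x = i)).card : ℝ) := by
                rw [hcount]; push_cast; ring
            _ ≤ ∑ i : Fin m, ((r i + 2 * s) / s) ^ d := Finset.sum_le_sum (fun i _ => by
                have h := hfiber i
                rw [div_pow, le_div_iff₀ (by positivity)]
                exact h)
            _ ≤ ∑ i : Fin m, 6 ^ d * Real.exp (n * (1 - θ) * d) * (r i / Real.exp n) ^ ρ :=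
                Finset.sum_le_sum (fun i _ =>
                  per_box d n θ ρ (r i) hθ0 hθ1 hρ0 hρd (hr1 i) (hA i).le)
            _ = 6 ^ d * Real.exp (n * (1 - θ) * d) * ∑ i, (r i / Real.exp n) ^ ρ := by
                rw [Finset.mul_sum]
        have hXpos : (0:ℝ) < Real.exp ((n:ℝ) * (1 - θ) * d) := Real.exp_pos _
        rw [show ((n:ℝ) * (d:ℝ) * (1 - θ)) = ((n:ℝ) * (1 - θ) * (d:ℝ)) from by ring] at hchain
        have hfin : a ≤ 6 ^ d * ∑ i, (r i / Real.exp n) ^ ρ := by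
          nlinarith [hchain, hXpos]
        rw [div_le_iff₀ (by positivity : (0:ℝ) < 6 ^ d)]
        linarith

lemma nu_nonneg (d : ℕ) (ρ : ℝ) (n : ℕ) (E : Set (Fin d → ℝ)) : 0 ≤ nuN d ρ n E := by
  apply Real.sInf_nonneg
  rintro t ⟨m, c, r, hr1, hcov, rfl⟩
  exact Finset.sum_nonneg fun i _ =>
    Real.rpow_nonneg (div_nonneg (zero_le_one.trans (hr1 i)) (Real.exp_pos _).le) ρ

lemma nu_upper (d : ℕ) (E : Set (Fin d → ℝ)) (ρ : ℝ) (n : ℕ) :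
    nuN d ρ n E ≤ ((⌈2 * Real.exp n⌉₊ : ℝ) ^ d) * Real.exp (-(n : ℝ) * ρ) := by
  classical
  set K : ℕ := ⌈2 * Real.exp n⌉₊ with hK_def
  apply csInf_le
  · refine ⟨0, ?_⟩
    rintro t ⟨m, c, r, hr1, hcov, rfl⟩
    exact Finset.sum_nonneg fun i _ =>
      Real.rpow_nonneg (div_nonneg (zero_le_one.trans (hr1 i)) (Real.exp_pos _).le) ρ
  · refine ⟨K ^ d, fun i j => -(Real.exp n) + ((finFunctionFinEquiv.symm i) j : ℕ),
      fun _ => 1, fun _ => le_refl 1, ?_, ?_⟩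
    · intro y hy
      have hyM := shell_subset_macroBall d n hy.2
      have h0 : ∀ j, 0 ≤ y j + Real.exp n := fun j => by linarith [(hyM j).1]
      have hlt : ∀ j, y j + Real.exp n < (K : ℝ) := fun j => by
        have := Nat.le_ceil (2 * Real.exp n)
        linarith [(hyM j).2]
      set v : Fin d → Fin K := fun j => ⟨⌊y j + Real.exp n⌋₊, (Nat.floor_lt (h0 j)).2 (hlt j)⟩
        with hv_def
      refine Set.mem_iUnion.2 ⟨finFunctionFinEquiv v, fun j => ?_⟩
      show y j ∈ Set.Ico (-(Real.exp n) + ((finFunctionFinEquiv.symm (finFunctionFinEquiv v)) j : ℕ))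
        (-(Real.exp n) + ((finFunctionFinEquiv.symm (finFunctionFinEquiv v)) j : ℕ) + 1)
      rw [Equiv.symm_apply_apply]
      have hfl : ((v j : ℕ) : ℝ) = (⌊y j + Real.exp n⌋₊ : ℝ) := rfl
      rw [hfl]
      constructor
      · linarith [Nat.floor_le (h0 j)]
      · linarith [Nat.lt_floor_add_one (y j + Real.exp n)]
    · rw [Finset.sum_const, Finset.card_univ, Fintype.card_fin, nsmul_eq_mul]
      push_cast
      congr 1
      rw [one_div, ← Real.exp_neg, exp_rpow']

lemma summable_nu (d : ℕ) (E : Set (Fin d → ℝ)) :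
    Summable (fun n => nuN d ((d : ℝ) + 1) n E) := by
  have hgeo : Summable (fun n : ℕ => (3:ℝ) ^ d * Real.exp (-1) ^ n) :=
    (summable_geometric_of_lt_one (Real.exp_pos _).le
      (Real.exp_lt_one_iff.2 (by norm_num))).mul_left _
  apply Summable.of_nonneg_of_le (fun n => nu_nonneg d _ n E) (fun n => ?_) hgeo
  refine (nu_upper d E _ n).trans ?_
  have he1 : (1:ℝ) ≤ Real.exp n := Real.one_le_exp (Nat.cast_nonneg n)
  have hK : ((⌈2 * Real.exp n⌉₊ : ℝ)) ≤ 3 * Real.exp n := by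
    have := Nat.ceil_lt_add_one (by positivity : (0:ℝ) ≤ 2 * Real.exp n)
    linarith
  have hKd : ((⌈2 * Real.exp n⌉₊ : ℝ)) ^ d ≤ 3 ^ d * Real.exp ((n:ℝ) * d) := by
    calc ((⌈2 * Real.exp n⌉₊ : ℝ)) ^ d ≤ (3 * Real.exp n) ^ d :=
          pow_le_pow_left₀ (Nat.cast_nonneg _) hK d
      _ = 3 ^ d * Real.exp ((n:ℝ) * d) := by
          rw [mul_pow, ← Real.exp_nat_mul, mul_comm (d:ℝ) (n:ℝ)]
  calc ((⌈2 * Real.exp n⌉₊ : ℝ) ^ d) * Real.exp (-(n : ℝ) * ((d:ℝ) + 1))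
      ≤ (3 ^ d * Real.exp ((n:ℝ) * d)) * Real.exp (-(n : ℝ) * ((d:ℝ) + 1)) :=
        mul_le_mul_of_nonneg_right hKd (Real.exp_pos _).le
    _ = 3 ^ d * Real.exp (-1) ^ n := by
        rw [mul_assoc, ← Real.exp_add]
        congr 1
        rw [← Real.exp_nat_mul]
        congr 1
        ring

/-- A θ-thick set (with respect to a θ-skeleton) has macroscopic Hausdorff
dimension at least d(1-θ). -/
theorem dimH_ge_of_thick (d : ℕ) (θ a : ℝ) (hθ0 : 0 < θ) (hθ1 : θ < 1)
    (ha0 : 0 < a) (ha1 : a < 1)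
    (Pi : ℕ → Finset (Fin d → ℝ)) (N : ℕ)
    (hsub : ∀ n ≥ N, ∀ x ∈ Pi n,
      uprightBox d x (Real.exp (θ * n)) ⊆ shell d n)
    (hdisj : ∀ n ≥ N, ∀ x ∈ Pi n, ∀ y ∈ Pi n, x ≠ y →
      Disjoint (uprightBox d x (Real.exp (θ * n))) (uprightBox d y (Real.exp (θ * n))))
    (hcard : ∀ n ≥ N,
      a * Real.exp (n * d * (1 - θ)) ≤ ((Pi n).card : ℝ) ∧
      ((Pi n).card : ℝ) ≤ a⁻¹ * Real.exp (n * d * (1 - θ)))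
    (E : Set (Fin d → ℝ)) (M : ℕ)
    (hthick : ∀ n ≥ M, ∀ x ∈ Pi n,
      (E ∩ uprightBox d x (Real.exp (θ * n))).Nonempty) :
    d * (1 - θ) ≤ DimH d E := by
  unfold DimH
  apply le_csInf
  · exact ⟨(d : ℝ) + 1, by positivity, summable_nu d E⟩
  · rintro ρ ⟨hρ0, hsum⟩
    by_contra hlt
    push_neg at hlt
    have hρd : ρ ≤ (d : ℝ) * (1 - θ) := hlt.le
    have hc : ∀ n, N ≤ n → M ≤ n → a / 6 ^ d ≤ nuN d ρ n E := fun n h1 h2 =>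
      nu_lower d θ a ρ hθ0 hθ1 ha0 ha1 Pi N hsub hdisj (fun k hk => (hcard k hk).1)
        E M hthick hρ0 hρd n h1 h2
    have htend := hsum.tendsto_atTop_zero
    have hev : ∀ᶠ n in Filter.atTop, nuN d ρ n E < a / 6 ^ d :=
      htend.eventually_lt_const (by positivity)
    obtain ⟨n0, hn0⟩ := Filter.eventually_atTop.1 hev
    have h₁ := hn0 (max n0 (max N M)) (le_max_left _ _)
    have h₂ := hc (max n0 (max N M)) ((le_max_left N M).trans (le_max_right _ _))
      ((le_max_right N M).trans (le_max_right _ _))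
    linarith
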